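/- arXiv:1109.4907 — 5 statements merged into one kernel-verified Lean document; each statement's English description precedes it below -/
import Mathlib

section
/- Define T(n,k) for n ≥ 0, k ∈ ℤ by T(0,0) = 1, T(0,k) = 0 for k ≠ 0, T(n,k) = 0 for k < 0, and T(n,k) = (k+1)T(n-1,k) + (n+1)T(n-1,k-1) + (n-k+1)T(n-1,k-2) for n ≥ 1. Then ∑_k T(n,k) = 4^n · n! / 2^n = 2^n · n!. -/
/-!
Each row `T n` vanishes outside `0 ≤ k ≤ n`, so its row sum is the sum over all of `ℤ`.
Summed over all `k`, and after shifting the index in the last two terms, the recurrence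
contributes `(k + 1) + (n - k) = n + 1` and `n + 2` times each `T n k`, so the row sum
is multiplied by `2n + 3` from row `n` to row `n + 1`.
-/

open Function

theorem finsum_comp_sub {M : Type*} [AddCommMonoid M] (f : ℤ → M) (j : ℤ) :
    ∑ᶠ k, f (k - j) = ∑ᶠ k, f k :=
  finsum_comp_equiv (Equiv.subRight j)

theorem finsum_eq_sum_range_of_support_subset {M : Type*} [AddCommMonoid M] {f : ℤ → M}
    {n : ℕ} (hf : support f ⊆ Set.Icc 0 (n : ℤ)) :
    ∑ᶠ k, f k = ∑ k ∈ Finset.range (n + 1), f k := by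
  rw [finsum_eq_sum_of_support_subset f (s := (Finset.range (n + 1)).map Nat.castEmbedding),
    Finset.sum_map]
  · rfl
  · intro k hk
    obtain ⟨hk₀, hkn⟩ := hf hk
    lift k to ℕ using hk₀
    simp only [Finset.coe_map, Finset.coe_range, Set.mem_image, Set.mem_Iio]
    exact ⟨k, by omega, rfl⟩

theorem finsum_staircase_rec {f : ℤ → ℤ} (hf : HasFiniteSupport f) (m : ℤ) :
    ∑ᶠ k, ((k + 1) * f k + (m + 2) * f (k - 1) + (m + 2 - k) * f (k - 2))
      = (2 * m + 3) * ∑ᶠ k, f k := by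
  calc ∑ᶠ k, ((k + 1) * f k + (m + 2) * f (k - 1) + (m + 2 - k) * f (k - 2))
      = ∑ᶠ k, (k + 1) * f k + ∑ᶠ k, (m + 2) * f (k - 1) + ∑ᶠ k, (m + 2 - k) * f (k - 2) := by
        rw [finsum_add_distrib, finsum_add_distrib] <;>
          fun_prop (disch := exact sub_left_injective)
    _ = ∑ᶠ k, (k + 1) * f k + ∑ᶠ k, (m + 2) * f k + ∑ᶠ k, (m - k) * f k := by
        rw [← finsum_comp_sub (fun k => (m + 2) * f k) 1,
          ← finsum_comp_sub (fun k => (m - k) * f k) 2]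
        simp only [sub_sub_eq_add_sub]
    _ = ∑ᶠ k, ((k + 1) * f k + (m + 2) * f k + (m - k) * f k) := by
        rw [finsum_add_distrib, finsum_add_distrib] <;> fun_prop
    _ = (2 * m + 3) * ∑ᶠ k, f k := by
        rw [mul_finsum]
        congr 1 with k
        ring

def StaircaseRecurrence (T : ℕ → ℤ → ℤ) : Prop :=
  ∀ n : ℕ, 1 ≤ n → ∀ k : ℤ, 0 ≤ k →
    T n k = (k + 1) * T (n - 1) k + ((n : ℤ) + 1) * T (n - 1) (k - 1)
      + ((n : ℤ) - k + 1) * T (n - 1) (k - 2)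

namespace StaircaseRecurrence

variable {T : ℕ → ℤ → ℤ}

theorem eq_zero_of_lt (hrec : StaircaseRecurrence T) (h0 : ∀ k : ℤ, k ≠ 0 → T 0 k = 0) :
    ∀ (n : ℕ) (k : ℤ), (n : ℤ) < k → T n k = 0 := by
  intro n
  induction n with
  | zero => exact fun k hk => h0 k hk.ne'
  | succ n ih =>
    intro k hk
    rw [hrec (n + 1) n.succ_pos k (by omega), Nat.add_sub_cancel, ih k (by omega),
      ih (k - 1) (by omega)]
    -- at `k = n + 2` the term `T n n` survives, but its coefficient `n + 2 - k` vanishes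
    rcases eq_or_lt_of_le (show (n : ℤ) + 2 ≤ k by omega) with rfl | hlt
    · push_cast; ring
    · rw [ih (k - 2) (by omega)]; ring

theorem support_subset_Icc (hrec : StaircaseRecurrence T) (h0 : ∀ k : ℤ, k ≠ 0 → T 0 k = 0)
    (hneg : ∀ (n : ℕ) (k : ℤ), k < 0 → T n k = 0) (n : ℕ) :
    support (T n) ⊆ Set.Icc 0 (n : ℤ) := by
  intro k hk
  by_contra hout
  rcases not_and_or.mp hout with h | h
  · exact hk (hneg n k (not_le.mp h))
  · exact hk (hrec.eq_zero_of_lt h0 n k (not_le.mp h))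

theorem succ_eq (hrec : StaircaseRecurrence T) (hneg : ∀ (n : ℕ) (k : ℤ), k < 0 → T n k = 0)
    (n : ℕ) (k : ℤ) :
    T (n + 1) k = (k + 1) * T n k + ((n : ℤ) + 2) * T n (k - 1)
      + ((n : ℤ) + 2 - k) * T n (k - 2) := by
  rcases lt_or_ge k 0 with hk | hk
  · simp [hneg _ k hk, hneg n (k - 1) (by omega), hneg n (k - 2) (by omega)]
  · rw [hrec (n + 1) n.succ_pos k hk, Nat.add_sub_cancel]
    push_cast
    ring

end StaircaseRecurrence

/-- with `T 0 0 = 1`, `T 0 k = 0` for `k ≠ 0`, `T n k = 0` for `k < 0`,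
and `T n k = (k+1) T (n-1) k + (n+1) T (n-1) (k-1) + (n-k+1) T (n-1) (k-2)` for `n ≥ 1`,
the row sums satisfy `∑ k, T n k = ∏_{j=0}^{n-1} (3 + 2j)`. -/
theorem stmt3 (T : ℕ → ℤ → ℤ)
    (h00 : T 0 0 = 1)
    (h0 : ∀ k : ℤ, k ≠ 0 → T 0 k = 0)
    (hneg : ∀ (n : ℕ) (k : ℤ), k < 0 → T n k = 0)
    (hrec : ∀ n : ℕ, 1 ≤ n → ∀ k : ℤ, 0 ≤ k →
      T n k = (k + 1) * T (n - 1) k + ((n : ℤ) + 1) * T (n - 1) (k - 1)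
              + ((n : ℤ) - k + 1) * T (n - 1) (k - 2))
    (n : ℕ) :
    ∑ k ∈ Finset.range (n + 1), T n (k : ℤ) =
      ∏ j ∈ Finset.range n, (3 + 2 * (j : ℤ)) := by
  have hrec : StaircaseRecurrence T := hrec
  have hsupp := hrec.support_subset_Icc h0 hneg
  rw [← finsum_eq_sum_range_of_support_subset (hsupp n)]
  induction n with
  | zero => simpa [finsum_eq_sum_range_of_support_subset (hsupp 0)] using h00
  | succ n ih =>
    have hfin : HasFiniteSupport (T n) := (Set.finite_Icc _ _).subset (hsupp n)
    simp only [hrec.succ_eq hneg n]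
    rw [finsum_staircase_rec hfin, ih, Finset.prod_range_succ]
    ring
end

section
/- Define real polynomials P_n by P_0 = 1 and P_n(y) = (1 + (n+1)y + (n-1)y^2)P_{n-1}(y) + (y - y^3)P_{n-1}'(y). Then for every n ≥ 1, P_n has n distinct real roots, all lying in the open interval (−1, 0). -/
/-! With `w(y) = (1 - y)^(-(n + 1/2)) (1 + y)^(1/2)` the recursion reads
`P_n(y) = (1 - y)^(n + 3/2) (1 + y)^(1/2) · (w(y) · y P_{n-1}(y))'` on `(-1, 1)`.
The function `w · y P_{n-1}` vanishes at `-1`, at `0` and at the `n - 1` roots of `P_{n-1}` in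
`(-1, 0)`, so by Rolle's theorem `P_n` has at least `n` roots there; as `deg P_n ≤ n`, these are
all of its roots. -/

open Polynomial Set

lemma Polynomial.coeff_X_mul_derivative {R : Type*} [CommSemiring R] (p : R[X]) (n : ℕ) :
    (X * derivative p).coeff n = n * p.coeff n := by
  cases n with
  | zero => simp
  | succ n => rw [coeff_X_mul, coeff_derivative, mul_comm]; push_cast; ring

lemma Polynomial.card_eq_and_isRoot_iff_of_natDegree_le {R : Type*} [CommRing R] [IsDomain R]
    {q : R[X]} (hq : q ≠ 0) {n : ℕ} (hdeg : q.natDegree ≤ n) {T : Finset R}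
    (hT : ∀ x ∈ T, q.IsRoot x) (hcard : n ≤ T.card) :
    T.card = n ∧ ∀ x, q.IsRoot x ↔ x ∈ T := by
  classical
  have hsub : T ⊆ q.roots.toFinset := fun x hx =>
    Multiset.mem_toFinset.2 ((mem_roots hq).2 (hT x hx))
  have hroots : q.roots.toFinset.card ≤ n :=
    (Multiset.toFinset_card_le _).trans (q.card_roots'.trans hdeg)
  have hTeq : T = q.roots.toFinset := Finset.eq_of_subset_of_card_le hsub (hroots.trans hcard)
  refine ⟨le_antisymm (hTeq ▸ hroots) hcard, fun x => ?_⟩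
  rw [hTeq, Multiset.mem_toFinset, mem_roots hq]

lemma card_zeros_le_card_deriv_zeros_add_one {f f' : ℝ → ℝ} {a b : ℝ}
    (hf : ContinuousOn f (Icc a b)) (hf' : ∀ x ∈ Ioo a b, HasDerivAt f (f' x) x)
    {Z T : Finset ℝ} (hZ : ↑Z ⊆ Icc a b) (hfZ : ∀ x ∈ Z, f x = 0)
    (hT : ∀ x ∈ Ioo a b, f' x = 0 → x ∈ T) : Z.card ≤ T.card + 1 := by
  refine Finset.card_le_of_interleaved fun x hx y hy hxy _ => ?_
  have hsub : Ioo x y ⊆ Ioo a b := Ioo_subset_Ioo (hZ hx).1 (hZ hy).2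
  obtain ⟨c, hc, hc0⟩ := exists_hasDerivAt_eq_zero hxy
    (hf.mono (Icc_subset_Icc (hZ hx).1 (hZ hy).2)) ((hfZ x hx).trans (hfZ y hy).symm)
    fun z hz => hf' z (hsub hz)
  exact ⟨c, hT c (hsub hc) hc0, hc⟩

noncomputable def fugacityStep (m : ℝ) (p : ℝ[X]) : ℝ[X] :=
  (1 + C (m + 1) * X + C (m - 1) * X ^ 2) * p + (X - X ^ 3) * derivative p

lemma fugacityStep_eval_zero (m : ℝ) (p : ℝ[X]) : (fugacityStep m p).eval 0 = p.eval 0 := by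
  simp [fugacityStep]

lemma coeff_fugacityStep_add_two (m : ℝ) (p : ℝ[X]) (j : ℕ) :
    (fugacityStep m p).coeff (j + 2) =
      (j + 3) * p.coeff (j + 2) + (m + 1) * p.coeff (j + 1) + (m - 1 - j) * p.coeff j := by
  have h : fugacityStep m p = p + C (m + 1) * (X * p) + C (m - 1) * (X ^ 2 * p)
      + X * derivative p - X ^ 2 * (X * derivative p) := by
    unfold fugacityStep; ring
  rw [h]
  simp only [coeff_add, coeff_sub, coeff_C_mul, coeff_X_pow_mul, coeff_X_mul_derivative,
    coeff_derivative, show j + 2 = j + 1 + 1 from rfl, coeff_X_mul]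
  push_cast
  ring

lemma natDegree_fugacityStep_le {p : ℝ[X]} {k : ℕ} (hp : p.natDegree ≤ k) :
    (fugacityStep (k + 1) p).natDegree ≤ k + 1 := by
  rw [natDegree_le_iff_coeff_eq_zero]
  intro N hN
  obtain ⟨j, rfl⟩ : ∃ j, N = j + 2 := ⟨N - 2, by omega⟩
  rw [coeff_fugacityStep_add_two, coeff_eq_zero_of_natDegree_lt (by omega : p.natDegree < j + 2),
    coeff_eq_zero_of_natDegree_lt (by omega : p.natDegree < j + 1)]
  rcases eq_or_ne j k with rfl | hjk
  · ring
  · rw [coeff_eq_zero_of_natDegree_lt (by omega : p.natDegree < j)]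
    ring

lemma fugacityStep_eq (m : ℝ) (p : ℝ[X]) :
    fugacityStep m p = (C (m + 1) + C m * X) * (X * p) + (1 - X ^ 2) * derivative (X * p) := by
  simp only [fugacityStep, derivative_mul, derivative_X, C_add, C_sub, C_1]
  ring

noncomputable def jacobiWeight (a b x : ℝ) : ℝ := (1 - x) ^ a * (1 + x) ^ b

lemma jacobiWeight_pos {a b x : ℝ} (hx : x ∈ Ioo (-1) 1) : 0 < jacobiWeight a b x := by
  unfold jacobiWeight
  exact mul_pos (Real.rpow_pos_of_pos (by linarith [hx.2]) a)
    (Real.rpow_pos_of_pos (by linarith [hx.1]) b)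

lemma jacobiWeight_neg_one (a : ℝ) {b : ℝ} (hb : b ≠ 0) : jacobiWeight a b (-1) = 0 := by
  simp [jacobiWeight, Real.zero_rpow hb]

lemma continuousOn_jacobiWeight (a : ℝ) {b : ℝ} (hb : 0 ≤ b) :
    ContinuousOn (jacobiWeight a b) (Ico (-1) 1) := by
  refine ContinuousOn.mul ?_ ?_
  · refine ContinuousOn.rpow_const (by fun_prop) fun x hx => Or.inl ?_
    linarith [hx.2]
  · exact ContinuousOn.rpow_const (by fun_prop) fun _ _ => Or.inr hb

lemma hasDerivAt_jacobiWeight (a b : ℝ) {x : ℝ} (hx : x ∈ Ioo (-1) 1) :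
    HasDerivAt (jacobiWeight a b)
      (jacobiWeight (a - 1) (b - 1) x * (b * (1 - x) - a * (1 + x))) x := by
  have h1 : 0 < 1 - x := by linarith [hx.2]
  have h2 : 0 < 1 + x := by linarith [hx.1]
  have hu := ((hasDerivAt_id' x).const_sub 1).rpow_const (p := a) (Or.inl h1.ne')
  have hv := ((hasDerivAt_id' x).const_add 1).rpow_const (p := b) (Or.inl h2.ne')
  refine (hu.mul hv).congr_deriv ?_
  rw [jacobiWeight, Real.rpow_sub_one h1.ne', Real.rpow_sub_one h2.ne']
  field_simp
  ring

lemma hasDerivAt_jacobiWeight_mul_eval (a b : ℝ) (q : ℝ[X]) {x : ℝ} (hx : x ∈ Ioo (-1) 1) :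
    HasDerivAt (fun y => jacobiWeight a b y * q.eval y)
      (jacobiWeight (a - 1) (b - 1) x *
        ((b * (1 - x) - a * (1 + x)) * q.eval x + (1 - x ^ 2) * (derivative q).eval x)) x := by
  have h1 : 0 < 1 - x := by linarith [hx.2]
  have h2 : 0 < 1 + x := by linarith [hx.1]
  have hw : jacobiWeight a b x = jacobiWeight (a - 1) (b - 1) x * ((1 - x) * (1 + x)) := by
    simp only [jacobiWeight, Real.rpow_sub_one h1.ne', Real.rpow_sub_one h2.ne']
    field_simp
  refine ((hasDerivAt_jacobiWeight a b hx).mul (q.hasDerivAt x)).congr_deriv ?_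
  rw [hw]
  ring

lemma hasDerivAt_jacobiWeight_mul_eval_X_mul (m : ℝ) (p : ℝ[X]) {x : ℝ}
    (hx : x ∈ Ioo (-1) 1) :
    HasDerivAt (fun y => jacobiWeight (-(m + 1 / 2)) (1 / 2) y * (X * p).eval y)
      (jacobiWeight (-(m + 3 / 2)) (-1 / 2) x * (fugacityStep m p).eval x) x := by
  convert hasDerivAt_jacobiWeight_mul_eval (-(m + 1 / 2)) (1 / 2) (X * p) hx using 1
  rw [show -(m + 1 / 2) - 1 = -(m + 3 / 2) by ring, show (1 / 2 : ℝ) - 1 = -1 / 2 by norm_num,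
    fugacityStep_eq]
  simp only [eval_add, eval_mul, eval_sub, eval_pow, eval_C, eval_X, eval_one]
  ring

lemma exists_roots_fugacityStep (m : ℝ) {p : ℝ[X]} (hq : fugacityStep m p ≠ 0)
    {S : Finset ℝ} (hS : ↑S ⊆ Ioo (-1 : ℝ) 0) (hp : ∀ x ∈ S, p.IsRoot x) :
    ∃ T : Finset ℝ, S.card + 1 ≤ T.card ∧ ↑T ⊆ Ioo (-1 : ℝ) 0 ∧
      ∀ x ∈ T, (fugacityStep m p).IsRoot x := by
  classical
  set T := (fugacityStep m p).roots.toFinset.filter (· ∈ Ioo (-1 : ℝ) 0)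
  refine ⟨T, ?_, fun x hx => (Finset.mem_filter.1 hx).2,
    fun x hx => (mem_roots hq).1 (Multiset.mem_toFinset.1 (Finset.mem_filter.1 hx).1)⟩
  have h0S : (0 : ℝ) ∉ S := fun h => (hS h).2.false
  have h1S : (-1 : ℝ) ∉ insert 0 S := by
    rw [Finset.mem_insert, not_or]
    exact ⟨by norm_num, fun h => (hS h).1.false⟩
  have hcard : (insert (-1) (insert 0 S)).card = S.card + 2 := by
    rw [Finset.card_insert_of_notMem h1S, Finset.card_insert_of_notMem h0S]
  have hcont : ContinuousOn (fun y => jacobiWeight (-(m + 1 / 2)) (1 / 2) y * (X * p).eval y)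
      (Icc (-1) 0) :=
    ((continuousOn_jacobiWeight _ (by norm_num)).mul (X * p).continuous.continuousOn).mono
      (Icc_subset_Ico_right (by norm_num))
  have := card_zeros_le_card_deriv_zeros_add_one (T := T) hcont
    (fun x hx => hasDerivAt_jacobiWeight_mul_eval_X_mul m p ⟨hx.1, hx.2.trans one_pos⟩)
    (Z := insert (-1) (insert 0 S)) ?_ ?_ ?_
  · omega
  · intro x hx
    simp only [Finset.coe_insert, mem_insert_iff] at hx
    rcases hx with rfl | rfl | hx
    · norm_num
    · norm_num
    · exact Ioo_subset_Icc_self (hS hx)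
  · intro x hx
    rw [Finset.mem_insert, Finset.mem_insert] at hx
    rcases hx with rfl | rfl | hx
    · rw [jacobiWeight_neg_one _ (by norm_num : (1 / 2 : ℝ) ≠ 0), zero_mul]
    · simp
    · simp [(hp x hx).eq_zero]
  · intro x hx hx0
    have hw :=
      (jacobiWeight_pos (a := -(m + 3 / 2)) (b := -1 / 2) ⟨hx.1, hx.2.trans one_pos⟩).ne'
    exact Finset.mem_filter.2
      ⟨Multiset.mem_toFinset.2 ((mem_roots hq).2 ((mul_eq_zero.1 hx0).resolve_left hw)), hx⟩

theorem stmt5_general (P : ℕ → Polynomial ℝ)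
    (h0 : P 0 = 1)
    (hrec : ∀ n : ℕ, 1 ≤ n →
      P n = (1 + Polynomial.C ((n : ℝ) + 1) * Polynomial.X
              + Polynomial.C ((n : ℝ) - 1) * Polynomial.X ^ 2) * P (n - 1)
            + (Polynomial.X - Polynomial.X ^ 3) * Polynomial.derivative (P (n - 1)))
    (n : ℕ) :
    ∃ S : Finset ℝ, S.card = n ∧ ↑S ⊆ Set.Ioo (-1 : ℝ) 0 ∧
      ∀ x : ℝ, (P n).IsRoot x ↔ x ∈ S := by
  have hstep (k : ℕ) : P (k + 1) = fugacityStep ((k : ℝ) + 1) (P k) := by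
    rw [hrec (k + 1) (by omega), fugacityStep]
    push_cast
    rfl
  have heval (k : ℕ) : (P k).eval 0 = 1 := by
    induction k with
    | zero => simp [h0]
    | succ k ih => rw [hstep, fugacityStep_eval_zero, ih]
  have hdeg (k : ℕ) : (P k).natDegree ≤ k := by
    induction k with
    | zero => simp [h0]
    | succ k ih => exact_mod_cast hstep k ▸ natDegree_fugacityStep_le ih
  induction n with
  | zero => exact ⟨∅, rfl, by simp, fun x => by simp [h0]⟩
  | succ k ih =>
    obtain ⟨S, hScard, hS, hSroots⟩ := ih
    have hne : P (k + 1) ≠ 0 := fun h => by simpa [h] using heval (k + 1)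
    obtain ⟨T, hTcard, hT, hTroots⟩ :=
      exists_roots_fugacityStep _ (hstep k ▸ hne) hS fun x hx => (hSroots x).2 hx
    rw [← hstep] at hTroots
    obtain ⟨hcard, hiff⟩ := card_eq_and_isRoot_iff_of_natDegree_le hne (hdeg (k + 1)) hTroots
      (by omega)
    exact ⟨T, hcard, hT, hiff⟩

/-- if `P 0 = 1` and
`P n = (1 + (n+1)y + (n-1)y²) P (n-1) + (y - y³) P (n-1)'`, then for every
`n ≥ 1`, `P n` has exactly `n` distinct real roots, all lying in `(-1, 0)`. -/
theorem stmt5 (P : ℕ → Polynomial ℝ)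
    (h0 : P 0 = 1)
    (hrec : ∀ n : ℕ, 1 ≤ n →
      P n = (1 + Polynomial.C ((n : ℝ) + 1) * Polynomial.X
              + Polynomial.C ((n : ℝ) - 1) * Polynomial.X ^ 2) * P (n - 1)
            + (Polynomial.X - Polynomial.X ^ 3) * Polynomial.derivative (P (n - 1)))
    (n : ℕ) (hn : 1 ≤ n) :
    ∃ S : Finset ℝ, S.card = n ∧ ↑S ⊆ Set.Ioo (-1 : ℝ) 0 ∧
      ∀ x : ℝ, (P n).IsRoot x ↔ x ∈ S :=
  stmt5_general P h0 hrec n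
end

section
/- Define real polynomials P_n by P_0 = 1 and P_n(y) = (1 + (n+1)y + (n-1)y^2)P_{n-1}(y) + (y - y^3)P_{n-1}'(y). Then the coefficient sequence of P_n is log-concave: for all 1 ≤ k ≤ n−1, T(n,k)^2 ≥ T(n,k−1)·T(n,k+1), where T(n,k) is the coefficient of y^k in P_n. -/
open Polynomial


noncomputable def stf : ℕ → ℤ → ℝ
  | 0, k => if k = 0 then 1 else 0
  | (n+1), k => ((k : ℝ) + 1) * stf n k + ((n : ℝ) + 2) * stf n (k-1)
      + ((n : ℝ) + 2 - (k : ℝ)) * stf n (k-2)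

lemma stf_succ (n : ℕ) (k : ℤ) : stf (n+1) k = ((k : ℝ) + 1) * stf n k
    + ((n : ℝ) + 2) * stf n (k-1) + ((n : ℝ) + 2 - (k : ℝ)) * stf n (k-2) := rfl

lemma stf_neg : ∀ (n : ℕ) (k : ℤ), k < 0 → stf n k = 0 := by
  intro n
  induction n with
  | zero => intro k hk; simp [stf]; omega
  | succ n ih =>
    intro k hk
    rw [stf_succ, ih k hk, ih (k-1) (by omega), ih (k-2) (by omega)]
    ring

lemma stf_gt : ∀ (n : ℕ) (k : ℤ), (n : ℤ) < k → stf n k = 0 := by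
  intro n
  induction n with
  | zero => intro k hk; simp [stf]; omega
  | succ n ih =>
    intro k hk
    rw [stf_succ, ih k (by omega), ih (k-1) (by omega)]
    rcases eq_or_lt_of_le (show (n:ℤ) + 2 ≤ k by omega) with h | h
    · have : ((n : ℝ) + 2 - (k : ℝ)) = 0 := by
        have : ((n:ℤ) + 2 : ℤ) = k := h
        push_cast [← this]; ring
      rw [this]; ring
    · rw [ih (k-2) (by omega)]; ring

lemma stf_nonneg : ∀ (n : ℕ) (k : ℤ), 0 ≤ stf n k := by
  intro n
  induction n with
  | zero => intro k; simp [stf]; split <;> norm_num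
  | succ n ih =>
    intro k
    rcases lt_or_ge k 0 with hk | hk
    · rw [stf_neg _ _ hk]
    rcases lt_or_ge ((n:ℤ)+1) k with hk2 | hk2
    · rw [stf_gt _ _ (by exact_mod_cast hk2)]
    rw [stf_succ]
    have h1 : (0:ℝ) ≤ (k:ℝ) + 1 := by
      have : (0:ℝ) ≤ (k:ℝ) := by exact_mod_cast hk
      linarith
    have h2 : (0:ℝ) ≤ (n:ℝ) + 2 := by positivity
    have h3 : (0:ℝ) ≤ (n:ℝ) + 2 - (k:ℝ) := by
      have : (k:ℝ) ≤ (n:ℝ) + 1 := by exact_mod_cast hk2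
      linarith
    have := ih k; have := ih (k-1); have := ih (k-2)
    nlinarith [mul_nonneg h1 (ih k), mul_nonneg h2 (ih (k-1)), mul_nonneg h3 (ih (k-2))]

lemma stf_pos : ∀ (n : ℕ) (k : ℤ), 0 ≤ k → k ≤ (n:ℤ) → 0 < stf n k := by
  intro n
  induction n with
  | zero =>
    intro k h1 h2
    have hk0 : k = 0 := by omega
    subst hk0
    simp [stf]
  | succ n ih =>
    intro k h1 h2
    rw [stf_succ]
    rcases lt_or_ge (n:ℤ) k with hk | hk
    · -- k = n+1
      have hkn : k = (n:ℤ) + 1 := by push_cast at h2; omega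
      have e1 : stf n k = 0 := stf_gt n k (by omega)
      have hpos : 0 < stf n (k-1) := ih (k-1) (by omega) (by omega)
      have h1' : (0:ℝ) < (n:ℝ) + 2 := by positivity
      have h3 : (0:ℝ) ≤ (n:ℝ) + 2 - (k:ℝ) := by
        have : (k:ℝ) ≤ (n:ℝ) + 1 := by exact_mod_cast h2.trans_eq (by push_cast; ring)
        linarith
      rw [e1]
      nlinarith [mul_pos h1' hpos, mul_nonneg h3 (stf_nonneg n (k-2))]
    · have hpos := ih k h1 hk
      have h1' : (0:ℝ) < (k:ℝ) + 1 := by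
        have : (0:ℝ) ≤ (k:ℝ) := by exact_mod_cast h1
        linarith
      have h3 : (0:ℝ) ≤ (n:ℝ) + 2 - (k:ℝ) := by
        have : (k:ℝ) ≤ (n:ℝ) := by exact_mod_cast hk
        linarith
      nlinarith [mul_pos h1' hpos, mul_nonneg (show (0:ℝ) ≤ (n:ℝ)+2 by positivity) (stf_nonneg n (k-1)), mul_nonneg h3 (stf_nonneg n (k-2))]



lemma stf_pos_of_ne (n : ℕ) (k : ℤ) (h : stf n k ≠ 0) : 0 < stf n k :=
  lt_of_le_of_ne (stf_nonneg n k) (Ne.symm h)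

lemma stf_zero_cases (n : ℕ) (k : ℤ) (h : stf n k = 0) : k < 0 ∨ (n:ℤ) < k := by
  by_contra hc
  push_neg at hc
  exact (stf_pos n k (by omega) hc.2).ne' h

/-- generalized log-concavity from log-concavity -/
lemma stf_glc (n : ℕ) (hlc : ∀ k : ℤ, stf n k * stf n (k+2) ≤ stf n (k+1) ^ 2)
    (i j : ℤ) (hij : i ≤ j) : stf n i * stf n (j+2) ≤ stf n (i+1) * stf n (j+1) := by
  obtain ⟨d, hd⟩ := Int.le.dest hij
  subst hd
  clear hij
  induction d with
  | zero =>
    have h := hlc i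
    rw [sq] at h
    push_cast
    rw [show i + (0:ℤ) + 2 = i + 2 by ring, show i + (0:ℤ) + 1 = i + 1 by ring]
    exact h
  | succ d IH =>
    push_cast
    rw [show i + ((d:ℤ)+1) + 2 = (i + (d:ℤ)) + 3 by ring,
        show i + ((d:ℤ)+1) + 1 = (i + (d:ℤ)) + 2 by ring]
    push_cast at IH
    set A := i + (d:ℤ) with hA
    by_cases h2 : stf n (A + 2) = 0
    · rcases stf_zero_cases n (A+2) h2 with hr | hr
      · rw [stf_neg n i (by omega), zero_mul]
        exact mul_nonneg (stf_nonneg _ _) (stf_nonneg _ _)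
      · rw [stf_gt n (A+3) (by omega), mul_zero, h2, mul_zero]
    · by_cases h1 : stf n (A + 1) = 0
      · rcases stf_zero_cases n (A+1) h1 with hr | hr
        · rw [stf_neg n i (by omega), zero_mul]
          exact mul_nonneg (stf_nonneg _ _) (stf_nonneg _ _)
        · rw [stf_gt n (A+3) (by omega), mul_zero]
          exact mul_nonneg (stf_nonneg _ _) (stf_nonneg _ _)
      · have p1 : 0 < stf n (A+1) := stf_pos_of_ne _ _ h1
        have p2 : 0 < stf n (A+2) := stf_pos_of_ne _ _ h2
        have hl := hlc (A+1)
        rw [show A+1+2 = A+3 by ring, show A+1+1 = A+2 by ring, sq] at hl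
        have key := mul_le_mul IH hl
          (mul_nonneg (stf_nonneg n (A+1)) (stf_nonneg n (A+3)))
          (mul_nonneg (stf_nonneg n (i+1)) (stf_nonneg n (A+1)))
        have hP : 0 < stf n (A+1) * stf n (A+2) := mul_pos p1 p2
        refine le_of_mul_le_mul_right ?_ hP
        nlinarith [key]

set_option maxHeartbeats 1000000 in
lemma stf_lc : ∀ (n : ℕ) (k : ℤ), stf n k * stf n (k+2) ≤ stf n (k+1) ^ 2 := by
  intro n
  induction n with
  | zero =>
    intro k
    rcases lt_or_ge k 0 with h | h
    · rw [stf_neg 0 k h, zero_mul]; positivity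
    · rw [stf_gt 0 (k+2) (by omega), mul_zero]; positivity
  | succ n ih =>
    intro k
    rcases lt_or_ge k 0 with hk | hk
    · rw [stf_neg (n+1) k hk, zero_mul]; positivity
    rcases lt_or_ge (n:ℤ) k with hk2 | hk2
    · rw [stf_gt (n+1) (k+2) (by push_cast; omega), mul_zero]; positivity
    -- 0 ≤ k ≤ n
    have glc := stf_glc n ih
    have g1 := glc k k le_rfl
    have g2 := glc (k-1) k (by omega)
    have g3 := glc (k-2) k (by omega)
    have g4 := glc (k-2) (k-1) (by omega)
    have g5 := glc (k-2) (k-2) le_rfl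
    have g6 := glc (k-1) (k-1) le_rfl
    rw [show k-1+1 = k by ring] at g2
    rw [show k-2+1 = k-1 by ring] at g3
    rw [show k-2+1 = k-1 by ring, show k-1+2 = k+1 by ring, show k-1+1 = k by ring] at g4
    rw [show k-2+1 = k-1 by ring, show k-2+2 = k by ring] at g5
    rw [show k-1+1 = k by ring, show k-1+2 = k+1 by ring] at g6
    rw [stf_succ n k, stf_succ n (k+1), stf_succ n (k+2)]
    rw [show k+1-1 = k by ring, show k+1-2 = k-1 by ring,
        show k+2-1 = k+1 by ring, show k+2-2 = k by ring]
    set a := stf n (k-2) with ha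
    set b := stf n (k-1) with hb
    set c := stf n k with hc
    set d := stf n (k+1) with hd
    set e := stf n (k+2) with he
    -- g1 : c * e ≤ d * d ; g2 : b * e ≤ c * d ; g3 : a * e ≤ b * d
    -- g4 : a * d ≤ b * c ; g5 : a * c ≤ b * b ; g6 : b * d ≤ c * c
    have hk0 : (0:ℝ) ≤ (k:ℝ) := by exact_mod_cast hk
    have hkn : (k:ℝ) ≤ (n:ℝ) := by exact_mod_cast hk2
    push_cast
    have q1 : (0:ℝ) ≤ ((k:ℝ)+1)*((k:ℝ)+3) * (d*d - c*e) :=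
      mul_nonneg (mul_nonneg (by linarith) (by linarith)) (by linarith [g1])
    have q2 : (0:ℝ) ≤ ((n:ℝ)+2)*((k:ℝ)+3) * (c*d - b*e) :=
      mul_nonneg (mul_nonneg (by linarith) (by linarith)) (by linarith [g2])
    have q3 : (0:ℝ) ≤ ((n:ℝ)+2-(k:ℝ))*((k:ℝ)+3) * (b*d - a*e) :=
      mul_nonneg (mul_nonneg (by linarith) (by linarith)) (by linarith [g3])
    have q4 : (0:ℝ) ≤ ((n:ℝ)+2-(k:ℝ))*((n:ℝ)+2) * (b*c - a*d) :=
      mul_nonneg (mul_nonneg (by linarith) (by linarith)) (by linarith [g4])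
    have q5 : (0:ℝ) ≤ ((n:ℝ)+2-(k:ℝ))*((n:ℝ)-(k:ℝ)) * (b*b - a*c) :=
      mul_nonneg (mul_nonneg (by linarith) (by linarith)) (by linarith [g5])
    have hq6 : (0:ℝ) ≤ ((n:ℝ)+2)^2-((k:ℝ)+1)*((n:ℝ)+2)+((k:ℝ)+1)^2+((k:ℝ)+1) := by
      nlinarith [mul_nonneg (show (0:ℝ) ≤ (n:ℝ)+2 by linarith)
        (show (0:ℝ) ≤ (n:ℝ)+2-((k:ℝ)+1) by linarith)]
    have q6 : (0:ℝ) ≤ (((n:ℝ)+2)^2-((k:ℝ)+1)*((n:ℝ)+2)+((k:ℝ)+1)^2+((k:ℝ)+1)) * (c*c - b*d) :=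
      mul_nonneg hq6 (by linarith [g6])
    have q7 : (0:ℝ) ≤ (d - b)^2 := sq_nonneg _
    linarith [q1, q2, q3, q4, q5, q6, q7]


open Polynomial


lemma stf_zero (k : ℤ) : stf 0 k = if k = 0 then 1 else 0 := rfl

lemma coeff_eq (P : ℕ → Polynomial ℝ)
    (h0 : P 0 = 1)
    (hrec : ∀ n : ℕ, 1 ≤ n →
      P n = (1 + Polynomial.C ((n : ℝ) + 1) * Polynomial.X
              + Polynomial.C ((n : ℝ) - 1) * Polynomial.X ^ 2) * P (n - 1)
            + (Polynomial.X - Polynomial.X ^ 3) * Polynomial.derivative (P (n - 1))) :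
    ∀ (n : ℕ) (j : ℕ), (P n).coeff j = stf n (j : ℤ) := by
  intro n
  induction n with
  | zero =>
    intro j
    rw [h0, stf_zero, Polynomial.coeff_one]
    rcases Nat.eq_zero_or_pos j with h | h
    · subst h; norm_num
    · rw [if_neg (by omega), if_neg (by exact_mod_cast (by omega : ¬ (j:ℤ) = 0))]
  | succ n ih =>
    intro j
    have hP := hrec (n+1) (by omega)
    simp only [Nat.add_sub_cancel] at hP
    rw [hP]
    set Q := P n with hQ
    have hexp : (1 + Polynomial.C ((↑(n+1) : ℝ) + 1) * X + Polynomial.C ((↑(n+1) : ℝ) - 1) * X ^ 2) * Q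
          + (X - X ^ 3) * derivative Q
        = Q + Polynomial.C ((↑(n+1) : ℝ) + 1) * (Q * X ^ 1) + Polynomial.C ((↑(n+1) : ℝ) - 1) * (Q * X ^ 2)
          + derivative Q * X ^ 1 - derivative Q * X ^ 3 := by ring
    rw [hexp]
    simp only [Polynomial.coeff_add, Polynomial.coeff_sub, Polynomial.coeff_C_mul,
      Polynomial.coeff_mul_X_pow']
    rcases j with _ | j
    · -- j = 0
      norm_num
      rw [ih 0, stf_succ]
      rw [show (0:ℤ) - 1 = -1 by ring, show (0:ℤ) - 2 = -2 by ring,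
        stf_neg n (-1) (by omega), stf_neg n (-2) (by omega)]
      push_cast
      ring
    rcases j with _ | j
    · -- j = 1
      norm_num [Polynomial.coeff_derivative]
      rw [ih 0, ih 1, stf_succ]
      rw [show (1:ℤ) - 1 = 0 by ring, show (1:ℤ) - 2 = -1 by ring,
        stf_neg n (-1) (by omega)]
      push_cast
      ring
    rcases j with _ | j
    · -- j = 2
      norm_num [Polynomial.coeff_derivative]
      rw [ih 0, ih 1, ih 2, stf_succ]
      rw [show (2:ℤ) - 1 = 1 by ring, show (2:ℤ) - 2 = 0 by ring]
      push_cast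
      ring
    · -- j = i + 3
      rw [if_pos (by omega), if_pos (by omega), if_pos (by omega)]
      rw [show j + 1 + 1 + 1 - 1 = j + 2 by omega, show j + 1 + 1 + 1 - 2 = j + 1 by omega,
        show j + 1 + 1 + 1 - 3 = j by omega]
      rw [Polynomial.coeff_derivative, Polynomial.coeff_derivative]
      rw [ih (j+3), ih (j+2), ih (j+1), stf_succ]
      rw [show ((j+1+1+1 : ℕ) : ℤ) - 1 = ((j:ℤ)+2) by push_cast; ring,
        show ((j+1+1+1 : ℕ) : ℤ) - 2 = ((j:ℤ)+1) by push_cast; ring]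
      push_cast
      ring


/-- with `P 0 = 1` and the recurrence
`P n = (1 + (n+1)y + (n-1)y²) P (n-1) + (y - y³) P (n-1)'`,
the coefficient sequence of `P n` is log-concave:
`T(n,k)² ≥ T(n,k-1) T(n,k+1)` for `1 ≤ k ≤ n - 1`. -/
theorem stmt7 (P : ℕ → Polynomial ℝ)
    (h0 : P 0 = 1)
    (hrec : ∀ n : ℕ, 1 ≤ n →
      P n = (1 + Polynomial.C ((n : ℝ) + 1) * Polynomial.X
              + Polynomial.C ((n : ℝ) - 1) * Polynomial.X ^ 2) * P (n - 1)
            + (Polynomial.X - Polynomial.X ^ 3) * Polynomial.derivative (P (n - 1)))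
    (n k : ℕ) (hk1 : 1 ≤ k) (hkn : k ≤ n - 1) :
    (P n).coeff (k - 1) * (P n).coeff (k + 1) ≤ ((P n).coeff k) ^ 2 := by
  have hc := coeff_eq P h0 hrec n
  rw [hc (k-1), hc (k+1), hc k]
  have e1 : ((k - 1 : ℕ) : ℤ) = (k : ℤ) - 1 := by omega
  rw [e1]
  have := stf_lc n ((k:ℤ) - 1)
  rw [show (k:ℤ) - 1 + 2 = (k:ℤ) + 1 by ring, show (k:ℤ) - 1 + 1 = (k:ℤ) by ring] at this
  push_cast
  exact this
end

section
/- Binary trees with n internal nodes are in bijection with almost-Dyck paths of size n−1, i.e., lattice paths of 2(n−1) steps (1,1) and (1,−1) from (0,0) to (2(n−1),0) whose ordinate never goes below −1. -/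
/-- An almost-Dyck path of size `m`: a lattice path of `2m` steps `(1,1)` and
`(1,-1)` (encoded by `±1`) from `(0,0)` to `(2m,0)` whose ordinate never goes
below `-1`. -/
def IsAlmostDyck (m : ℕ) (l : List ℤ) : Prop :=
  l.length = 2 * m ∧ (∀ x ∈ l, x = 1 ∨ x = -1) ∧ l.sum = 0 ∧
    ∀ i : ℕ, -1 ≤ (l.take i).sum

/-!
Encode the steps `U`, `D` of a Dyck word as `1`, `-1`. A nonempty Dyck word is `U w D`, and
removing the outer pair turns "all prefix sums of `U w D` are `≥ 0`" into "all prefix sums of `w`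
are `≥ -1`". So almost-Dyck paths of size `n - 1` correspond to Dyck words of semilength `n`, which
`DyckWord.equivTree` puts in bijection with binary trees with `n` internal nodes.
-/

section PrefixSums
variable {α : Type*} [AddMonoid α] [Preorder α]

lemma List.forall_le_sum_take_cons {c a : α} {l : List α} :
    (∀ i, c ≤ ((a :: l).take i).sum) ↔ c ≤ 0 ∧ ∀ i, c ≤ a + (l.take i).sum := by
  refine ⟨fun h => ⟨by simpa using h 0, fun i => by simpa using h (i + 1)⟩, fun ⟨h0, h⟩ i => ?_⟩
  cases i with
  | zero => simpa using h0
  | succ i => simpa using h i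

lemma List.forall_le_sum_take_concat {c b : α} {l : List α} :
    (∀ i, c ≤ ((l ++ [b]).take i).sum) ↔ (∀ i, c ≤ (l.take i).sum) ∧ c ≤ l.sum + b := by
  refine ⟨fun h => ⟨fun i => ?_, by simpa using h (l.length + 1)⟩, fun ⟨h, hb⟩ i => ?_⟩
  · rcases le_or_gt i l.length with hi | hi
    · simpa [List.take_append_of_le_length hi] using h i
    · simpa [List.take_of_length_le hi.le] using h l.length
  · rcases le_or_gt i l.length with hi | hi
    · simpa [List.take_append_of_le_length hi] using h i
    · rw [List.take_of_length_le (by simp; omega)]; simpa using hb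
end PrefixSums

open List DyckStep

namespace DyckStep

def toInt : DyckStep → ℤ
  | U => 1
  | D => -1

def ofInt (x : ℤ) : DyckStep := if x = 1 then U else D

@[simp] lemma toInt_U : toInt U = 1 := rfl

@[simp] lemma toInt_D : toInt D = -1 := rfl

@[simp] lemma ofInt_toInt (s : DyckStep) : ofInt s.toInt = s := by
  cases s <;> simp [ofInt]

lemma toInt_ofInt {x : ℤ} (h : x = 1 ∨ x = -1) : (ofInt x).toInt = x := by
  rcases h with rfl | rfl <;> simp [ofInt]

lemma toInt_eq_one_or_eq_neg_one (s : DyckStep) : s.toInt = 1 ∨ s.toInt = -1 := by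
  cases s <;> simp

end DyckStep

lemma List.sum_map_toInt (w : List DyckStep) :
    (w.map toInt).sum = w.count U - w.count D := by
  induction w with
  | nil => simp
  | cons s w ih => cases s <;> simp [ih] <;> ring

lemma List.map_toInt_map_ofInt {l : List ℤ} (h : ∀ x ∈ l, x = 1 ∨ x = -1) :
    (l.map ofInt).map toInt = l := by
  rw [map_map, map_congr_left (f := toInt ∘ ofInt) (g := id) fun x hx => toInt_ofInt (h x hx),
    map_id]

def IsDyckPath (l : List ℤ) : Prop :=
  (∀ x ∈ l, x = 1 ∨ x = -1) ∧ l.sum = 0 ∧ ∀ i : ℕ, 0 ≤ (l.take i).sum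

lemma isDyckPath_cons_append_iff {l : List ℤ} :
    IsDyckPath (1 :: (l ++ [-1])) ↔
      (∀ x ∈ l, x = 1 ∨ x = -1) ∧ l.sum = 0 ∧ ∀ i : ℕ, -1 ≤ (l.take i).sum := by
  have shift : (∀ i, (0 : ℤ) ≤ 1 + ((l ++ [-1]).take i).sum) ↔
      ∀ i, -1 ≤ ((l ++ [-1]).take i).sum := forall_congr' fun i => by omega
  simp only [IsDyckPath, forall_mem_cons, forall_mem_append, sum_cons, sum_append,
    forall_le_sum_take_cons, shift, forall_le_sum_take_concat]
  constructor
  · rintro ⟨⟨-, hl, -⟩, hsum, -, hpre, -⟩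
    exact ⟨hl, by simpa using hsum, hpre⟩
  · rintro ⟨hl, hsum, hpre⟩
    exact ⟨⟨by simp, hl, by simp⟩, by simp [hsum], le_rfl, hpre, by simp [hsum]⟩

lemma isAlmostDyck_iff {m : ℕ} {l : List ℤ} :
    IsAlmostDyck m l ↔ l.length = 2 * m ∧ IsDyckPath (1 :: (l ++ [-1])) := by
  rw [isDyckPath_cons_append_iff, IsAlmostDyck]

namespace DyckWord

lemma isDyckPath_map_toInt (p : DyckWord) : IsDyckPath (p.toList.map toInt) := by
  refine ⟨by simpa using fun s _ => toInt_eq_one_or_eq_neg_one s, ?_, fun i => ?_⟩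
  · rw [sum_map_toInt, p.count_U_eq_count_D, sub_self]
  · rw [← map_take, sum_map_toInt, sub_nonneg]
    exact_mod_cast p.count_D_le_count_U i

def ofDyckPath (l : List ℤ) (hl : IsDyckPath l) : DyckWord where
  toList := l.map ofInt
  count_U_eq_count_D := by
    have := sum_map_toInt (l.map ofInt)
    rw [map_toInt_map_ofInt hl.1, hl.2.1] at this
    omega
  count_D_le_count_U i := by
    have hsum := sum_map_toInt ((l.take i).map ofInt)
    rw [map_toInt_map_ofInt fun x hx => hl.1 x (mem_of_mem_take hx)] at hsum
    rw [← map_take]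
    have := hl.2.2 i
    omega

@[simp] lemma toList_ofDyckPath (l : List ℤ) (hl : IsDyckPath l) :
    (ofDyckPath l hl).toList = l.map ofInt := rfl

lemma map_toInt_toList_eq {p : DyckWord} (hp : p ≠ 0) :
    p.toList.map toInt = 1 :: (p.toList.dropLast.tail.map toInt ++ [-1]) := by
  conv_lhs => rw [← p.cons_tail_dropLast_concat hp]
  simp

lemma ne_zero_of_semilength_eq_add_one {p : DyckWord} {m : ℕ} (hp : p.semilength = m + 1) :
    p ≠ 0 := by
  rintro rfl
  simp at hp

lemma two_mul_semilength_ofDyckPath (l : List ℤ) (hl : IsDyckPath l) :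
    2 * (ofDyckPath l hl).semilength = l.length := by
  rw [two_mul_semilength_eq_length, toList_ofDyckPath, length_map]

lemma isAlmostDyck_map_toInt_dropLast_tail {m : ℕ} {p : DyckWord} (hp : p.semilength = m + 1) :
    IsAlmostDyck m (p.toList.dropLast.tail.map toInt) := by
  rw [isAlmostDyck_iff, ← map_toInt_toList_eq (ne_zero_of_semilength_eq_add_one hp)]
  refine ⟨?_, p.isDyckPath_map_toInt⟩
  have := p.two_mul_semilength_eq_length
  simp only [length_map, length_tail, length_dropLast]
  omega

def equivAlmostDyck (m : ℕ) :
    {p : DyckWord // p.semilength = m + 1} ≃ {l : List ℤ // IsAlmostDyck m l} where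
  toFun p := ⟨p.1.toList.dropLast.tail.map toInt, isAlmostDyck_map_toInt_dropLast_tail p.2⟩
  invFun l := ⟨ofDyckPath _ (isAlmostDyck_iff.1 l.2).2, by
    have := two_mul_semilength_ofDyckPath _ (isAlmostDyck_iff.1 l.2).2
    simp only [length_cons, length_append, length_nil, l.2.1] at this
    omega⟩
  left_inv p := by
    refine Subtype.ext <| DyckWord.ext ?_
    dsimp only
    rw [toList_ofDyckPath, ← map_toInt_toList_eq (ne_zero_of_semilength_eq_add_one p.2), map_map]
    simp [Function.comp_def]
  right_inv l := by
    refine Subtype.ext ?_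
    dsimp only
    rw [toList_ofDyckPath, map_tail, map_dropLast, map_toInt_map_ofInt (isAlmostDyck_iff.1 l.2).2.1,
      ← cons_append, dropLast_concat, tail_cons]

end DyckWord

/-- for `n ≥ 1`, binary trees with `n` internal nodes are in
bijection with almost-Dyck paths of size `n - 1`. -/
theorem stmt14 (n : ℕ) (hn : 1 ≤ n) :
    Nonempty ({t : Tree Unit // t.numNodes = n} ≃
      {l : List ℤ // IsAlmostDyck (n - 1) l}) := by
  obtain ⟨m, rfl⟩ := Nat.exists_eq_add_of_le' hn
  rw [Nat.add_sub_cancel]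
  exact ⟨(DyckWord.equivTree.subtypeEquiv fun p => by simp).symm.trans
    (DyckWord.equivAlmostDyck m)⟩
end

section
/- For real polynomials, if P has all roots real, simple, and contained in (−1,0), and Q(y) = (1 + (n+1)y + (n−1)y²)P(y) + (y − y³)P'(y) with deg P = n−1 ≥ 0, then Q can be written as Q(y) = e^{−λ(y)} · d/dy[(y − y³) e^{λ(y)} P(y)] where λ(y) = −(n + 3/2)·ln(1−y) − (1/2)·ln(1+y), as an identity of functions on (−1,1). -/
open Polynomial in
/-- if `P` is a real polynomial of degree `n - 1 ≥ 0` with all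
roots real, simple and contained in `(-1,0)`, and
`λ(y) = -(n + 3/2) log(1-y) - (1/2) log(1+y)`, then on `(-1,1)` we have the
identity
`e^{-λ(y)} ((y - y³) e^{λ(y)} P(y))' = (1 + (n+1)y + (n-1)y²) P(y) + (y - y³) P'(y)`. -/
theorem stmt18 (n : ℕ) (hn : 1 ≤ n) (P : Polynomial ℝ)
    (hdeg : P.natDegree = n - 1)
    (hsplit : P.Splits)
    (hsimple : P.roots.Nodup)
    (hroots : ∀ x ∈ P.roots, x ∈ Set.Ioo (-1 : ℝ) 0)
    (lam : ℝ → ℝ)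
    (hlam : ∀ y : ℝ, lam y = -((n : ℝ) + 3 / 2) * Real.log (1 - y)
                              - (1 / 2) * Real.log (1 + y)) :
    ∀ y ∈ Set.Ioo (-1 : ℝ) 1,
      Real.exp (-lam y) *
          deriv (fun z : ℝ => (z - z ^ 3) * Real.exp (lam z) * P.eval z) y =
        (1 + ((n : ℝ) + 1) * y + ((n : ℝ) - 1) * y ^ 2) * P.eval y
          + (y - y ^ 3) * P.derivative.eval y := by
  intro y hy
  obtain ⟨hy1, hy2⟩ := hy
  have h1 : (1 : ℝ) - y ≠ 0 := by linarith
  have h2 : (1 : ℝ) + y ≠ 0 := by linarith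
  have hlamf : lam = fun z => -((n : ℝ) + 3 / 2) * Real.log (1 - z)
      - (1 / 2) * Real.log (1 + z) := funext hlam
  have hd1 : HasDerivAt (fun z : ℝ => 1 - z) (-1) y := (hasDerivAt_id y).const_sub 1
  have hd2 : HasDerivAt (fun z : ℝ => 1 + z) 1 y := by
    simpa using (hasDerivAt_id y).const_add 1
  have hlog1 : HasDerivAt (fun z : ℝ => Real.log (1 - z)) (-1 / (1 - y)) y := hd1.log h1
  have hlog2 : HasDerivAt (fun z : ℝ => Real.log (1 + z)) (1 / (1 + y)) y := hd2.log h2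
  set L : ℝ := -((n : ℝ) + 3 / 2) * (-1 / (1 - y)) - (1 / 2) * (1 / (1 + y)) with hL
  have hlamd : HasDerivAt lam L y := by
    rw [hlamf]
    exact (hlog1.const_mul _).sub (hlog2.const_mul _)
  have hexp : HasDerivAt (fun z => Real.exp (lam z)) (Real.exp (lam y) * L) y := hlamd.exp
  have hcube : HasDerivAt (fun z : ℝ => z - z ^ 3) (1 - 3 * y ^ 2) y := by
    have := ((hasDerivAt_id' y).sub (hasDerivAt_pow 3 y))
    exact this.congr_deriv (by norm_num)
  have hP : HasDerivAt (fun z : ℝ => P.eval z) (P.derivative.eval y) y := P.hasDerivAt y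
  have hfull : HasDerivAt (fun z : ℝ => (z - z ^ 3) * Real.exp (lam z) * P.eval z)
      (((1 - 3 * y ^ 2) * Real.exp (lam y) + (y - y ^ 3) * (Real.exp (lam y) * L))
        * P.eval y + (y - y ^ 3) * Real.exp (lam y) * P.derivative.eval y) y :=
    (hcube.mul hexp).mul hP
  rw [hfull.deriv, Real.exp_neg]
  have hE : Real.exp (lam y) ≠ 0 := Real.exp_ne_zero _
  rw [hL]
  field_simp
  ring
end
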